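/- arXiv:2505.08227 — 2 statements merged into one kernel-verified Lean document; each statement's English description precedes it below -/
import Mathlib

section
/- For the Mallow-weighted Huber regression gradient Ψ(θ, (x,y)) = -min(1, c/|y - xᵀθ|) · (y - xᵀθ) · ω(x) · x with ω(x) = min(1, 2/‖x‖²), we have ‖Ψ(θ, (x,y))‖₂ ≤ √2 · c for all θ, x, y; consequently the global sensitivity sup over pairs of data points of ‖Ψ(θ,z) - Ψ(θ,z')‖₂ is at most 2√2 c. -/
open RealInnerProductSpace

lemma clip_abs_le {c r : ℝ} (hc : 0 < c) : |min 1 (c / |r|) * r| ≤ c := by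
  rcases eq_or_ne r 0 with h | h
  · simp [h]; positivity
  · have hr : 0 < |r| := abs_pos.mpr h
    have h1 : 0 ≤ min 1 (c / |r|) := le_min zero_le_one (by positivity)
    rw [abs_mul, abs_of_nonneg h1]
    calc min 1 (c / |r|) * |r| ≤ (c / |r|) * |r| := by
          apply mul_le_mul_of_nonneg_right (min_le_right _ _) hr.le
      _ = c := by field_simp

lemma omega_mul_norm_le {p : ℕ} (ω : EuclideanSpace ℝ (Fin p) → ℝ)
    (hω0 : ω 0 = 1)
    (hω : ∀ x : EuclideanSpace ℝ (Fin p), x ≠ 0 → ω x = min 1 (2 / ‖x‖ ^ 2))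
    (x : EuclideanSpace ℝ (Fin p)) : 0 ≤ ω x ∧ ω x * ‖x‖ ≤ Real.sqrt 2 := by
  rcases eq_or_ne x 0 with h | h
  · constructor
    · simp [h, hω0]
    · simp [h]
  · have hx : 0 < ‖x‖ := norm_pos_iff.mpr h
    rw [hω x h]
    constructor
    · exact le_min zero_le_one (by positivity)
    rcases le_or_gt ‖x‖ (Real.sqrt 2) with hle | hgt
    · calc min 1 (2 / ‖x‖ ^ 2) * ‖x‖ ≤ 1 * ‖x‖ := by
            apply mul_le_mul_of_nonneg_right (min_le_left _ _) hx.le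
        _ ≤ Real.sqrt 2 := by simpa using hle
    · have h2 : Real.sqrt 2 < ‖x‖ := hgt
      have hs : (0:ℝ) < Real.sqrt 2 := by positivity
      calc min 1 (2 / ‖x‖ ^ 2) * ‖x‖ ≤ (2 / ‖x‖ ^ 2) * ‖x‖ := by
            apply mul_le_mul_of_nonneg_right (min_le_right _ _) hx.le
        _ = 2 / ‖x‖ := by field_simp
        _ ≤ 2 / Real.sqrt 2 := by
            apply div_le_div_of_nonneg_left (by norm_num) hs h2.le
        _ = Real.sqrt 2 := by
            rw [eq_comm, eq_div_iff hs.ne', Real.mul_self_sqrt (by norm_num : (0:ℝ) ≤ 2)]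

theorem stmt_5 (p : ℕ) (c : ℝ) (hc : 0 < c)
    (ω : EuclideanSpace ℝ (Fin p) → ℝ)
    (hω0 : ω 0 = 1)
    (hω : ∀ x : EuclideanSpace ℝ (Fin p), x ≠ 0 → ω x = min 1 (2 / ‖x‖ ^ 2))
    (Ψ : EuclideanSpace ℝ (Fin p) → EuclideanSpace ℝ (Fin p) × ℝ → EuclideanSpace ℝ (Fin p))
    (hΨ : ∀ (θ x : EuclideanSpace ℝ (Fin p)) (y : ℝ),
      Ψ θ (x, y) = -(min 1 (c / |y - ⟪x, θ⟫|) * (y - ⟪x, θ⟫) * ω x) • x) :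
    (∀ (θ x : EuclideanSpace ℝ (Fin p)) (y : ℝ), ‖Ψ θ (x, y)‖ ≤ Real.sqrt 2 * c) ∧
    (∀ (θ : EuclideanSpace ℝ (Fin p)) (z z' : EuclideanSpace ℝ (Fin p) × ℝ),
      ‖Ψ θ z - Ψ θ z'‖ ≤ 2 * Real.sqrt 2 * c) := by
  have key : ∀ (θ x : EuclideanSpace ℝ (Fin p)) (y : ℝ), ‖Ψ θ (x, y)‖ ≤ Real.sqrt 2 * c := by
    intro θ x y
    obtain ⟨hω_nonneg, hω_norm⟩ := omega_mul_norm_le ω hω0 hω x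
    rw [hΨ θ x y, norm_smul, norm_neg, Real.norm_eq_abs, abs_mul,
      abs_of_nonneg hω_nonneg]
    calc |min 1 (c / |y - ⟪x, θ⟫|) * (y - ⟪x, θ⟫)| * ω x * ‖x‖
        ≤ c * (ω x * ‖x‖) := by
          rw [mul_assoc]
          exact mul_le_mul_of_nonneg_right (clip_abs_le hc) (by positivity)
      _ ≤ c * Real.sqrt 2 := by
          exact mul_le_mul_of_nonneg_left hω_norm hc.le
      _ = Real.sqrt 2 * c := mul_comm _ _
  refine ⟨key, fun θ z z' => ?_⟩
  calc ‖Ψ θ z - Ψ θ z'‖ ≤ ‖Ψ θ z‖ + ‖Ψ θ z'‖ := norm_sub_le _ _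
    _ ≤ Real.sqrt 2 * c + Real.sqrt 2 * c := by
        exact add_le_add (by rw [← Prod.mk.eta (p := z)]; exact key θ z.1 z.2)
          (by rw [← Prod.mk.eta (p := z')]; exact key θ z'.1 z'.2)
    _ = 2 * Real.sqrt 2 * c := by ring
end

section
/- Consider the deterministic recursion a_n ≤ (1 - λ γ_n) a_{n-1} + C γ_n², n ≥ 1, with γ_n = γ n^{-α} for γ > 0, λ > 0, 1/2 < α < 1, C ≥ 0, and a_n ≥ 0. Then there exist n₀ ∈ ℕ and a constant c (depending on γ, λ, α, C, a₀) such that a_n ≤ c n^{-α} for all n ≥ n₀. -/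
theorem stmt_13 (γ lam α C : ℝ) (hγ : 0 < γ) (hlam : 0 < lam)
    (hα1 : 1 / 2 < α) (hα2 : α < 1) (hC : 0 ≤ C)
    (a : ℕ → ℝ) (ha : ∀ n, 0 ≤ a n)
    (hrec : ∀ n : ℕ, 1 ≤ n →
      a n ≤ (1 - lam * (γ * (n : ℝ) ^ (-α))) * a (n - 1) + C * (γ * (n : ℝ) ^ (-α)) ^ 2) :
    ∃ (n₀ : ℕ) (c : ℝ), 0 < c ∧ ∀ n ≥ n₀, a n ≤ c * (n : ℝ) ^ (-α) := by
  have hα0 : (0:ℝ) < α := by linarith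
  have h1 : Filter.Tendsto (fun n : ℕ => (n:ℝ) ^ α) Filter.atTop Filter.atTop :=
    (tendsto_rpow_atTop hα0).comp tendsto_natCast_atTop_atTop
  have h2 : Filter.Tendsto (fun n : ℕ => (n:ℝ) ^ (1 - α)) Filter.atTop Filter.atTop :=
    (tendsto_rpow_atTop (by linarith)).comp tendsto_natCast_atTop_atTop
  obtain ⟨N₁, hN₁⟩ := Filter.eventually_atTop.mp (h1.eventually_ge_atTop (lam * γ))
  obtain ⟨N₂, hN₂⟩ := Filter.eventually_atTop.mp (h2.eventually_ge_atTop (4 / (lam * γ)))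
  set n₀ : ℕ := max (max N₁ N₂) 2 with hn₀def
  have hN₁n₀ : N₁ ≤ n₀ := le_trans (le_max_left N₁ N₂) (le_max_left _ 2)
  have hN₂n₀ : N₂ ≤ n₀ := le_trans (le_max_right N₁ N₂) (le_max_left _ 2)
  have hn₀2 : 2 ≤ n₀ := le_max_right _ 2
  clear_value n₀
  set c : ℝ := max (2 * C * γ / lam) (a n₀ * (n₀:ℝ) ^ α) + 1 with hcdef
  have hmax0 : (0:ℝ) ≤ max (2 * C * γ / lam) (a n₀ * (n₀:ℝ) ^ α) :=
    le_trans (mul_nonneg (ha n₀) (Real.rpow_nonneg (Nat.cast_nonneg _) _)) (le_max_right _ _)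
  have hcpos : 0 < c := by rw [hcdef]; linarith
  have hc1 : 2 * C * γ / lam ≤ c := by
    rw [hcdef]; have := le_max_left (2 * C * γ / lam) (a n₀ * (n₀:ℝ) ^ α); linarith
  have hc2 : a n₀ * (n₀:ℝ) ^ α ≤ c := by
    rw [hcdef]; have := le_max_right (2 * C * γ / lam) (a n₀ * (n₀:ℝ) ^ α); linarith
  clear_value c
  refine ⟨n₀, c, hcpos, ?_⟩
  have hcC : C * γ ^ 2 ≤ c * lam * γ / 2 := by
    rw [div_le_iff₀ hlam] at hc1
    nlinarith [mul_le_mul_of_nonneg_right hc1 hγ.le]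
  intro n hn
  induction n, hn using Nat.le_induction with
  | base =>
    have hn₀pos : (0:ℝ) < (n₀:ℝ) := by
      have : 0 < n₀ := by omega
      exact_mod_cast this
    have hx : (0:ℝ) < (n₀:ℝ) ^ (-α) := Real.rpow_pos_of_pos hn₀pos _
    have hmul : (n₀:ℝ) ^ α * (n₀:ℝ) ^ (-α) = 1 := by
      rw [← Real.rpow_add hn₀pos]; simp
    calc a n₀ = a n₀ * ((n₀:ℝ) ^ α * (n₀:ℝ) ^ (-α)) := by rw [hmul]; ring
      _ = (a n₀ * (n₀:ℝ) ^ α) * (n₀:ℝ) ^ (-α) := by ring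
      _ ≤ c * (n₀:ℝ) ^ (-α) := mul_le_mul_of_nonneg_right hc2 hx.le
  | succ n hn' IH =>
    have hnN₁ : N₁ ≤ n + 1 := by omega
    have hnN₂ : N₂ ≤ n + 1 := by omega
    have hn1 : 1 ≤ n := by omega
    have hnpos : (0:ℝ) < (n:ℝ) := by
      have : 0 < n := by omega
      exact_mod_cast this
    have hn1R : (1:ℝ) ≤ (n:ℝ) := by exact_mod_cast hn1
    set mn : ℝ := (n:ℝ) + 1 with hmndef
    have hmnpos : (0:ℝ) < mn := by rw [hmndef]; linarith
    have hcast : ((n + 1 : ℕ) : ℝ) = mn := by rw [hmndef]; push_cast; ring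
    set x : ℝ := mn ^ (-α) with hxdef
    have hxpos : 0 < x := Real.rpow_pos_of_pos hmnpos _
    have hmα : 0 < mn ^ α := Real.rpow_pos_of_pos hmnpos _
    have hxe : x = (mn ^ α)⁻¹ := by rw [hxdef, Real.rpow_neg hmnpos.le]
    -- condition A
    have hα' : lam * γ ≤ mn ^ α := by
      have := hN₁ (n + 1) hnN₁; rw [hcast] at this; exact this
    have hA : lam * (γ * x) ≤ 1 := by
      have he : lam * (γ * x) = lam * γ / mn ^ α := by rw [hxe]; ring
      rw [he, div_le_one hmα]; exact hα'
    -- condition B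
    have hB : 2 / mn ≤ lam * γ / 2 * x := by
      have h4 : 4 / (lam * γ) ≤ mn ^ (1 - α) := by
        have := hN₂ (n + 1) hnN₂; rw [hcast] at this; exact this
      have hxe2 : x = mn ^ (1 - α) / mn := by
        rw [hxdef, div_eq_mul_inv, ← Real.rpow_neg_one mn, ← Real.rpow_add hmnpos]
        congr 1; ring
      have hlg : 0 < lam * γ := mul_pos hlam hγ
      have h2' : (2:ℝ) ≤ lam * γ / 2 * mn ^ (1 - α) := by
        have hmm := mul_le_mul_of_nonneg_left h4 (by positivity : (0:ℝ) ≤ lam * γ / 2)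
        have he : lam * γ / 2 * (4 / (lam * γ)) = 2 := by field_simp; ring
        linarith
      rw [hxe2, ← mul_div_assoc]
      gcongr
    -- condition D : (n:ℝ)^(-α) ≤ x * (1 + 2/mn)
    have hD : (n:ℝ) ^ (-α) ≤ x * (1 + 2 / mn) := by
      set r : ℝ := mn / (n:ℝ) with hrdef
      have hr1 : (1:ℝ) ≤ r := by
        rw [hrdef, le_div_iff₀ hnpos, hmndef]; linarith
      have heq : (n:ℝ) ^ (-α) = x * r ^ α := by
        have h1 : r ^ α = mn ^ α * (n:ℝ) ^ (-α) := by
          rw [hrdef, Real.div_rpow hmnpos.le hnpos.le, div_eq_mul_inv,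
            ← Real.rpow_neg hnpos.le]
        rw [h1, hxdef, ← mul_assoc, ← Real.rpow_add hmnpos]
        simp
      have hrα : r ^ α ≤ r := by
        calc r ^ α ≤ r ^ (1:ℝ) := Real.rpow_le_rpow_of_exponent_le hr1 (by linarith)
          _ = r := Real.rpow_one r
      have hrb : r ≤ 1 + 2 / mn := by
        rw [hrdef, div_le_iff₀ hnpos]
        have hkey : (1:ℝ) ≤ 2 / mn * (n:ℝ) := by
          rw [div_mul_eq_mul_div, le_div_iff₀ hmnpos, hmndef]; linarith
        have : (1 + 2 / mn) * (n:ℝ) = (n:ℝ) + 2 / mn * (n:ℝ) := by ring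
        rw [this, hmndef]; linarith
      rw [heq]
      exact mul_le_mul_of_nonneg_left (hrα.trans hrb) hxpos.le
    clear_value x
    -- main chain
    have hrec' := hrec (n + 1) (by omega)
    simp only [Nat.add_sub_cancel] at hrec'
    rw [hcast, ← hxdef] at hrec'
    have hfac : 0 ≤ 1 - lam * (γ * x) := by linarith
    have step1 : a (n + 1) ≤ (1 - lam * (γ * x)) * (c * ((n:ℝ) ^ (-α))) + C * (γ * x) ^ 2 := by
      refine le_trans hrec' ?_
      have := mul_le_mul_of_nonneg_left IH hfac
      linarith
    have step2 : (1 - lam * (γ * x)) * (c * ((n:ℝ) ^ (-α))) ≤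
        (1 - lam * (γ * x)) * (c * (x * (1 + 2 / mn))) :=
      mul_le_mul_of_nonneg_left (mul_le_mul_of_nonneg_left hD hcpos.le) hfac
    have hepos : (0:ℝ) ≤ 2 / mn := by positivity
    have step3 : (1 - lam * (γ * x)) * (c * (x * (1 + 2 / mn))) + C * (γ * x) ^ 2
        ≤ c * x := by
      have e1 : c * x * (2 / mn) ≤ c * x * (lam * γ / 2 * x) :=
        mul_le_mul_of_nonneg_left hB (by positivity)
      have e2 : C * γ ^ 2 * x ^ 2 ≤ c * lam * γ / 2 * x ^ 2 :=
        mul_le_mul_of_nonneg_right hcC (sq_nonneg x)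
      nlinarith [mul_nonneg (mul_nonneg (mul_nonneg hlam.le hγ.le) (mul_nonneg hxpos.le
        (mul_nonneg hcpos.le hxpos.le))) hepos]
    calc a (n + 1) ≤ (1 - lam * (γ * x)) * (c * ((n:ℝ) ^ (-α))) + C * (γ * x) ^ 2 := step1
      _ ≤ (1 - lam * (γ * x)) * (c * (x * (1 + 2 / mn))) + C * (γ * x) ^ 2 := by linarith
      _ ≤ c * x := step3
      _ = c * ((n + 1 : ℕ) : ℝ) ^ (-α) := by rw [hcast, ← hxdef]
end
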